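/- Let $(\Omega, \mathcal{F}, \mathbb{P})$ be a probability space, $p \geq 1$, and $\rho : L^p(\Omega,\mathcal{F},\mathbb{P}) \to \mathbb{R}$ a convex function which is nondecreasing with respect to the $\mathbb{P}$-almost sure partial order (i.e., $X \leq Y$ a.s. implies $\rho(X) \leq \rho(Y)$). Then $\rho$ is continuous with respect to the $L^p$-norm. -/

import Mathlib

/-!
A convex function is continuous as soon as it is bounded above near one point, so it is enough
to bound `f` above near `0`. If it were not, there would be `xₙ` with `‖xₙ‖ < 4⁻ⁿ` and
`f xₙ > n`. The series `z = ∑ 2ⁿ |xₙ|` converges, and `yₙ = 2ⁿ |xₙ| ≤ z` in the lattice order.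
Monotonicity and convexity along the segment `[0, yₙ]` then give
`f xₙ ≤ f |xₙ| = f (2⁻ⁿ • yₙ) ≤ max (f 0) (f yₙ) ≤ max (f 0) (f z)`, a contradiction.
-/

open MeasureTheory Filter Topology

lemma ConvexOn.apply_smul_le_max {E : Type*} [AddCommGroup E] [Module ℝ E] {f : E → ℝ}
    (hf : ConvexOn ℝ Set.univ f) {t : ℝ} (ht₀ : 0 ≤ t) (ht₁ : t ≤ 1) (y : E) :
    f (t • y) ≤ max (f 0) (f y) := by
  simpa using hf.le_on_segment' (Set.mem_univ 0) (Set.mem_univ y) (sub_nonneg.2 ht₁) ht₀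
    (sub_add_cancel 1 t)

section BanachLattice

variable {E : Type*} [NormedAddCommGroup E] [Lattice E] [HasSolidNorm E] [IsOrderedAddMonoid E]

lemma exists_forall_abs_le_of_summable_norm [CompleteSpace E] [OrderClosedTopology E]
    {x : ℕ → E} (hx : Summable fun n ↦ ‖x n‖) : ∃ z : E, ∀ n, |x n| ≤ z := by
  have hsum : Summable fun n ↦ |x n| :=
    Summable.of_norm_bounded hx fun n ↦ (norm_abs_eq_norm (x n)).le
  exact ⟨∑' n, |x n|, fun n ↦ hsum.le_tsum n fun m _ ↦ abs_nonneg (x m)⟩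

variable [NormedSpace ℝ E] [CompleteSpace E] [OrderClosedTopology E]

lemma ConvexOn.isBoundedUnder_le_nhds_zero_of_monotone {f : E → ℝ}
    (hf : ConvexOn ℝ Set.univ f) (hmono : Monotone f) :
    (𝓝 (0 : E)).IsBoundedUnder (· ≤ ·) f := by
  by_contra hunbdd
  have hbig : ∀ n : ℕ, ∃ x : E, ‖x‖ < (4 : ℝ)⁻¹ ^ n ∧ (n : ℝ) < f x := by
    intro n
    have hfreq : ∃ᶠ x in 𝓝 (0 : E), ¬ f x ≤ n :=
      not_eventually.1 fun h ↦ hunbdd ⟨n, h⟩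
    have hsmall : ∀ᶠ x in 𝓝 (0 : E), ‖x‖ < (4 : ℝ)⁻¹ ^ n := by
      filter_upwards [Metric.ball_mem_nhds (0 : E) (by positivity : (0 : ℝ) < 4⁻¹ ^ n)]
        with x hx
      simpa using hx
    obtain ⟨x, hfx, hx⟩ := (hfreq.and_eventually hsmall).exists
    exact ⟨x, hx, not_le.1 hfx⟩
  choose x hx_norm hx_big using hbig
  set y : ℕ → E := fun n ↦ (2 : ℝ) ^ n • |x n|
  have hy_norm : ∀ n, ‖y n‖ ≤ (2 : ℝ)⁻¹ ^ n := fun n ↦ calc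
    ‖y n‖ = (2 : ℝ) ^ n * ‖x n‖ := by simp [y, norm_smul, norm_abs_eq_norm]
    _ ≤ (2 : ℝ) ^ n * (4 : ℝ)⁻¹ ^ n := by gcongr; exact (hx_norm n).le
    _ = (2 : ℝ)⁻¹ ^ n := by rw [← mul_pow]; norm_num
  obtain ⟨z, hz⟩ := exists_forall_abs_le_of_summable_norm (x := y)
    (Summable.of_nonneg_of_le (fun n ↦ norm_nonneg _) hy_norm
      (summable_geometric_of_lt_one (by norm_num) (by norm_num)))
  obtain ⟨n, hn⟩ := exists_nat_gt (max (f 0) (f z))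
  have hx_eq : |x n| = (2 : ℝ)⁻¹ ^ n • y n := by
    simp [y, smul_smul]
  have : f (x n) ≤ max (f 0) (f z) := calc
    f (x n) ≤ f (|x n|) := hmono (le_abs_self _)
    _ = f ((2 : ℝ)⁻¹ ^ n • y n) := by rw [hx_eq]
    _ ≤ max (f 0) (f (y n)) :=
      hf.apply_smul_le_max (by positivity) (pow_le_one₀ (by norm_num) (by norm_num)) _
    _ ≤ max (f 0) (f z) := by gcongr; exact hmono ((le_abs_self _).trans (hz n))
  linarith [hx_big n]

theorem ConvexOn.continuous_of_monotone {f : E → ℝ} (hf : ConvexOn ℝ Set.univ f)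
    (hmono : Monotone f) : Continuous f := by
  have htfae := (hf.continuousOn_tfae isOpen_univ Set.univ_nonempty).out 3 1
  exact continuousOn_univ.1 <| htfae.1
    ⟨0, Set.mem_univ _, hf.isBoundedUnder_le_nhds_zero_of_monotone hmono⟩

end BanachLattice

theorem stmt_15_general {Ω : Type*} [MeasurableSpace Ω] (μ : Measure Ω)
    (p : ENNReal) [Fact (1 ≤ p)]
    (ρ : Lp ℝ p μ → ℝ)
    (hconv : ConvexOn ℝ Set.univ ρ)
    (hmono : ∀ X Y : Lp ℝ p μ, (X : Ω → ℝ) ≤ᵐ[μ] (Y : Ω → ℝ) → ρ X ≤ ρ Y) :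
    Continuous ρ :=
  hconv.continuous_of_monotone fun X Y hXY ↦ hmono X Y ((Lp.coeFn_le X Y).2 hXY)

theorem stmt_15 {Ω : Type*} [MeasurableSpace Ω] (μ : Measure Ω) [IsProbabilityMeasure μ]
    (p : ENNReal) [Fact (1 ≤ p)] (hp : p ≠ ⊤)
    (ρ : Lp ℝ p μ → ℝ)
    (hconv : ConvexOn ℝ Set.univ ρ)
    (hmono : ∀ X Y : Lp ℝ p μ, (X : Ω → ℝ) ≤ᵐ[μ] (Y : Ω → ℝ) → ρ X ≤ ρ Y) :
    Continuous ρ :=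
  stmt_15_general μ p ρ hconv hmono
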